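/- arXiv:2008.08642 — 3 statements merged into one kernel-verified Lean document; each statement's English description precedes it below -/
import Mathlib

section
/- Fix δ > 0, p ∈ (1,∞) with conjugate q = p/(p−1), and positive semidefinite symmetric matrices K₁,…,K_J. The function H(α) = −δαᵀα + 2αᵀ1 − ‖u(α)‖_q, where u(α)ⱼ = αᵀKⱼα, is concave on ℝⁿ. -/
open Matrix Finset

lemma quad_cvx {n : ℕ} (K : Matrix (Fin n) (Fin n) ℝ) (hK : K.PosSemidef)
    (x y : Fin n → ℝ) (a b : ℝ) (ha : 0 ≤ a) (hb : 0 ≤ b) (hab : a + b = 1) :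
    (a • x + b • y) ⬝ᵥ K *ᵥ (a • x + b • y) ≤ a * (x ⬝ᵥ K *ᵥ x) + b * (y ⬝ᵥ K *ᵥ y) := by
  have h := hK.dotProduct_mulVec_nonneg (x - y)
  simp only [star_trivial, Matrix.mulVec_sub, dotProduct_sub, sub_dotProduct] at h
  simp only [Matrix.mulVec_add, Matrix.mulVec_smul, dotProduct_add, add_dotProduct,
    dotProduct_smul, smul_dotProduct, smul_eq_mul]
  have hb' : b = 1 - a := by linarith
  subst hb'
  nlinarith [mul_nonneg (mul_nonneg ha hb) h]

theorem stmt8 (n J : ℕ) (K : Fin J → Matrix (Fin n) (Fin n) ℝ)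
    (hK : ∀ j, (K j).PosSemidef) (δ : ℝ) (hδ : 0 < δ)
    (p : ℝ) (hp : 1 < p) (q : ℝ) (hq : q = p / (p - 1))
    (ones : Fin n → ℝ) (hones : ones = fun _ => 1)
    (H : (Fin n → ℝ) → ℝ)
    (hH : H = fun α => -δ * (α ⬝ᵥ α) + 2 * (α ⬝ᵥ ones) -
      (∑ j, (α ⬝ᵥ (K j *ᵥ α)) ^ q) ^ (1 / q)) :
    ConcaveOn ℝ Set.univ H := by
  have hq1 : 1 ≤ q := by
    rw [hq]; rw [le_div_iff₀ (by linarith)]; linarith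
  have hq0 : 0 < q := by linarith
  refine ⟨convex_univ, fun x _ y _ a b ha hb hab => ?_⟩
  simp only [hH, smul_eq_mul]
  -- the quadratic dot-product part
  have hquad : (a • x + b • y) ⬝ᵥ (a • x + b • y) ≤ a * (x ⬝ᵥ x) + b * (y ⬝ᵥ y) := by
    have h := quad_cvx (1 : Matrix (Fin n) (Fin n) ℝ) Matrix.PosSemidef.one x y a b ha hb hab
    simpa using h
  -- linear part
  have hlin : (a • x + b • y) ⬝ᵥ ones = a * (x ⬝ᵥ ones) + b * (y ⬝ᵥ ones) := by
    simp [add_dotProduct, smul_dotProduct, smul_eq_mul]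
  -- norm part
  set Φ : (Fin n → ℝ) → ℝ := fun z => (∑ j, (z ⬝ᵥ (K j *ᵥ z)) ^ q) ^ (1 / q) with hΦ
  have hnn : ∀ (z : Fin n → ℝ) j, 0 ≤ z ⬝ᵥ (K j *ᵥ z) := fun z j => by
    simpa using (hK j).dotProduct_mulVec_nonneg z
  -- homogeneity
  have hhomog : ∀ (c : ℝ) (u : Fin J → ℝ), 0 ≤ c → (∀ j, 0 ≤ u j) →
      (∑ j, (c * u j) ^ q) ^ (1 / q) = c * (∑ j, (u j) ^ q) ^ (1 / q) := by
    intro c u hc hu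
    have : ∀ j ∈ Finset.univ, (c * u j) ^ q = c ^ q * (u j) ^ q := fun j _ =>
      Real.mul_rpow hc (hu j)
    rw [Finset.sum_congr rfl this, ← Finset.mul_sum,
      Real.mul_rpow (Real.rpow_nonneg hc q) (Finset.sum_nonneg fun j _ => Real.rpow_nonneg (hu j) q),
      ← Real.rpow_mul hc, mul_one_div, div_self (ne_of_gt hq0), Real.rpow_one]
  have hΦkey : Φ (a • x + b • y) ≤ a * Φ x + b * Φ y := by
    have step1 : Φ (a • x + b • y) ≤
        (∑ j, (a * (x ⬝ᵥ (K j *ᵥ x)) + b * (y ⬝ᵥ (K j *ᵥ y))) ^ q) ^ (1 / q) := by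
      apply Real.rpow_le_rpow (Finset.sum_nonneg fun j _ => Real.rpow_nonneg (hnn _ j) q) _
        (by positivity)
      apply Finset.sum_le_sum
      intro j _
      exact Real.rpow_le_rpow (hnn _ j) (quad_cvx (K j) (hK j) x y a b ha hb hab) (le_of_lt hq0)
    have step2 : (∑ j, (a * (x ⬝ᵥ (K j *ᵥ x)) + b * (y ⬝ᵥ (K j *ᵥ y))) ^ q) ^ (1 / q) ≤
        (∑ j, (a * (x ⬝ᵥ (K j *ᵥ x))) ^ q) ^ (1 / q) +
        (∑ j, (b * (y ⬝ᵥ (K j *ᵥ y))) ^ q) ^ (1 / q) := by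
      have := Real.Lp_add_le Finset.univ (fun j => a * (x ⬝ᵥ (K j *ᵥ x)))
        (fun j => b * (y ⬝ᵥ (K j *ᵥ y))) hq1
      have habs : ∀ (c : ℝ) (z : Fin n → ℝ), 0 ≤ c → ∀ j, |c * (z ⬝ᵥ (K j *ᵥ z))| = c * (z ⬝ᵥ (K j *ᵥ z)) :=
        fun c z hc j => abs_of_nonneg (mul_nonneg hc (hnn z j))
      simp only [fun j => abs_of_nonneg (add_nonneg (mul_nonneg ha (hnn x j)) (mul_nonneg hb (hnn y j))),
        habs a x ha, habs b y hb] at this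
      exact this
    calc Φ (a • x + b • y) ≤ _ := step1
      _ ≤ _ := step2
      _ = a * Φ x + b * Φ y := by
          rw [hhomog a _ ha (fun j => hnn x j), hhomog b _ hb (fun j => hnn y j)]
  have hmul := mul_le_mul_of_nonneg_left hquad (le_of_lt hδ)
  linarith [hΦkey, hmul, hlin.le, hlin.ge]
end

section
/- The function β ↦ 1ᵀ(δI + ΣⱼβⱼKⱼ)⁻¹1 is convex on the set {β ∈ ℝ^J : β ≥ 0}, where δ > 0 and each Kⱼ is symmetric positive semidefinite. -/
open Matrix Finset

private lemma psd_smul {n : ℕ} {A : Matrix (Fin n) (Fin n) ℝ} (hA : A.PosSemidef)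
    {c : ℝ} (hc : 0 ≤ c) : (c • A).PosSemidef := by
  refine Matrix.PosSemidef.of_dotProduct_mulVec_nonneg ?_ (fun x => ?_)
  · unfold Matrix.IsHermitian
    rw [conjTranspose_smul, hA.1]
    simp
  · rw [smul_mulVec, dotProduct_smul, smul_eq_mul]
    exact mul_nonneg hc (hA.dotProduct_mulVec_nonneg x)

private lemma Mpos {n J : ℕ} (K : Fin J → Matrix (Fin n) (Fin n) ℝ)
    (hK : ∀ j, (K j).PosSemidef) {δ : ℝ} (hδ : 0 < δ) (β : Fin J → ℝ)
    (hβ : ∀ j, 0 ≤ β j) :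
    (δ • (1 : Matrix (Fin n) (Fin n) ℝ) + ∑ j, β j • K j).PosDef := by
  apply Matrix.PosDef.add_posSemidef
  · refine Matrix.PosDef.of_dotProduct_mulVec_pos ?_ (fun x hx => ?_)
    · unfold Matrix.IsHermitian
      rw [conjTranspose_smul, conjTranspose_one]
      simp
    · rw [smul_mulVec, dotProduct_smul, one_mulVec, smul_eq_mul]
      have : (0:ℝ) < star x ⬝ᵥ x := by
        simpa using (Matrix.dotProduct_star_self_pos_iff (R := ℝ)).mpr hx
      · positivity
  · exact Finset.sum_induction _ _ (fun a b ha hb => ha.add hb) Matrix.PosSemidef.zero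
      (fun j _ => psd_smul (hK j) (hβ j))

-- key inequality:  2 x⬝1 − xᵀAx ≤ 1⬝y  when A psd, Ay = ones
private lemma key {n : ℕ} {A : Matrix (Fin n) (Fin n) ℝ} (hA : A.PosSemidef)
    (x y ones : Fin n → ℝ) (hy : A *ᵥ y = ones) :
    2 * (x ⬝ᵥ ones) - x ⬝ᵥ (A *ᵥ x) ≤ ones ⬝ᵥ y := by
  have hsymm : Aᵀ = A := by
    have := hA.1
    unfold Matrix.IsHermitian at this
    simpa using this
  have hyAx : y ⬝ᵥ (A *ᵥ x) = ones ⬝ᵥ x := by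
    rw [dotProduct_mulVec, ← mulVec_transpose, hsymm, hy]
  have h0 := hA.dotProduct_mulVec_nonneg (y - x)
  simp only [star_trivial] at h0
  rw [sub_dotProduct, Matrix.mulVec_sub, dotProduct_sub, dotProduct_sub, hy, hyAx] at h0
  have c1 : x ⬝ᵥ ones = ones ⬝ᵥ x := dotProduct_comm _ _
  have c2 : y ⬝ᵥ ones = ones ⬝ᵥ y := dotProduct_comm _ _
  linarith

theorem stmt13 (n J : ℕ) (K : Fin J → Matrix (Fin n) (Fin n) ℝ)
    (hK : ∀ j, (K j).PosSemidef) (δ : ℝ) (hδ : 0 < δ)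
    (ones : Fin n → ℝ) (hones : ones = fun _ => 1) :
    ConvexOn ℝ {β : Fin J → ℝ | ∀ j, 0 ≤ β j}
      (fun β => ones ⬝ᵥ
        ((δ • (1 : Matrix (Fin n) (Fin n) ℝ) + ∑ j, β j • K j)⁻¹ *ᵥ ones)) := by
  constructor
  · intro p hp q hq a b ha hb hab j
    simp only [Pi.add_apply, Pi.smul_apply, smul_eq_mul]
    exact add_nonneg (mul_nonneg ha (hp j)) (mul_nonneg hb (hq j))
  · intro β hβ γ hγ a b ha hb hab
    simp only [smul_eq_mul]
    set M1 := δ • (1 : Matrix (Fin n) (Fin n) ℝ) + ∑ j, β j • K j with hM1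
    set M2 := δ • (1 : Matrix (Fin n) (Fin n) ℝ) + ∑ j, γ j • K j with hM2
    have hβγ : ∀ j, 0 ≤ (a • β + b • γ) j := fun j => by
      simp only [Pi.add_apply, Pi.smul_apply, smul_eq_mul]
      exact add_nonneg (mul_nonneg ha (hβ j)) (mul_nonneg hb (hγ j))
    have hcomb : δ • (1 : Matrix (Fin n) (Fin n) ℝ) + ∑ j, (a • β + b • γ) j • K j
        = a • M1 + b • M2 := by
      rw [hM1, hM2, smul_add, smul_add, Finset.smul_sum, Finset.smul_sum]
      rw [add_add_add_comm, ← add_smul, hab, one_smul, ← Finset.sum_add_distrib]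
      congr 1
      refine Finset.sum_congr rfl fun j _ => ?_
      simp only [Pi.add_apply, Pi.smul_apply, smul_eq_mul, smul_smul]
      rw [add_smul]
    have hMpos := Mpos K hK hδ (a • β + b • γ) hβγ
    have hM1pos := Mpos K hK hδ β hβ
    have hM2pos := Mpos K hK hδ γ hγ
    rw [hcomb] at hMpos ⊢
    set M := a • M1 + b • M2 with hM
    set x := M⁻¹ *ᵥ ones with hx
    set x1 := M1⁻¹ *ᵥ ones with hx1
    set x2 := M2⁻¹ *ᵥ ones with hx2
    have hMx : M *ᵥ x = ones := by
      rw [hx, mulVec_mulVec, Matrix.mul_nonsing_inv _ hMpos.det_pos.ne'.isUnit, one_mulVec]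
    have hM1x : M1 *ᵥ x1 = ones := by
      rw [hx1, mulVec_mulVec, Matrix.mul_nonsing_inv _ hM1pos.det_pos.ne'.isUnit, one_mulVec]
    have hM2x : M2 *ᵥ x2 = ones := by
      rw [hx2, mulVec_mulVec, Matrix.mul_nonsing_inv _ hM2pos.det_pos.ne'.isUnit, one_mulVec]
    have k1 := key hM1pos.posSemidef x x1 ones hM1x
    have k2 := key hM2pos.posSemidef x x2 ones hM2x
    have hexp : x ⬝ᵥ (M *ᵥ x) = a * (x ⬝ᵥ (M1 *ᵥ x)) + b * (x ⬝ᵥ (M2 *ᵥ x)) := by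
      rw [hM, add_mulVec, smul_mulVec, smul_mulVec, dotProduct_add,
        dotProduct_smul, dotProduct_smul, smul_eq_mul, smul_eq_mul]
    have ht : x ⬝ᵥ ones = a * (x ⬝ᵥ (M1 *ᵥ x)) + b * (x ⬝ᵥ (M2 *ᵥ x)) := by
      conv_lhs => rw [← hMx]
      exact hexp
    have heq : a * (2 * (x ⬝ᵥ ones) - x ⬝ᵥ (M1 *ᵥ x))
        + b * (2 * (x ⬝ᵥ ones) - x ⬝ᵥ (M2 *ᵥ x)) = x ⬝ᵥ ones := by
      have h2 : a * (2 * (x ⬝ᵥ ones) - x ⬝ᵥ (M1 *ᵥ x))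
          + b * (2 * (x ⬝ᵥ ones) - x ⬝ᵥ (M2 *ᵥ x))
          = 2 * (x ⬝ᵥ ones) * (a + b)
            - (a * (x ⬝ᵥ (M1 *ᵥ x)) + b * (x ⬝ᵥ (M2 *ᵥ x))) := by ring
      rw [h2, hab, ← ht]
      ring
    have hco : ones ⬝ᵥ x = x ⬝ᵥ ones := dotProduct_comm _ _
    linarith [mul_le_mul_of_nonneg_left k1 ha, mul_le_mul_of_nonneg_left k2 hb]
end

section
/- If α* is a fixed point of the map f(α) = (δI + Σⱼ βⱼ(α)Kⱼ)⁻¹1, where βⱼ(α) = u(α)ⱼ^{1/(p−1)}/‖u(α)^{1/(p−1)}‖_p and u(α)ⱼ = αᵀKⱼα > 0 for all j, then the pair (α*, β(α*)) satisfies the first-order stationarity conditions of the saddle-point problem min_{β≥0, ‖β‖_p≤1} max_α −αᵀ(ΣⱼβⱼKⱼ)α − δαᵀα + 2αᵀ1: namely, α* maximizes L(·, β(α*)) and β(α*) minimizes L(α*, ·) over the constraint set. -/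
open Matrix Finset

theorem stmt15 (n J : ℕ) (K : Fin J → Matrix (Fin n) (Fin n) ℝ)
    (hK : ∀ j, (K j).PosDef) (δ : ℝ) (hδ : 0 < δ)
    (p : ℝ) (hp : 1 < p)
    (ones : Fin n → ℝ) (hones : ones = fun _ => 1)
    (u : (Fin n → ℝ) → Fin J → ℝ)
    (hu : u = fun α j => α ⬝ᵥ (K j *ᵥ α))
    (βfun : (Fin n → ℝ) → Fin J → ℝ)
    (hβfun : βfun = fun α j =>
      (u α j) ^ (1 / (p - 1)) / (∑ k, ((u α k) ^ (1 / (p - 1))) ^ p) ^ (1 / p))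
    (L : (Fin n → ℝ) → (Fin J → ℝ) → ℝ)
    (hL : L = fun α β =>
      -(α ⬝ᵥ ((∑ j, β j • K j) *ᵥ α)) - δ * (α ⬝ᵥ α) + 2 * (α ⬝ᵥ ones))
    (S : Set (Fin J → ℝ))
    (hS : S = {β | (∀ j, 0 ≤ β j) ∧ (∑ j, (β j) ^ p) ^ (1 / p) ≤ 1})
    (αstar : Fin n → ℝ) (hne : αstar ≠ 0)
    (hfix : αstar =
      (δ • (1 : Matrix (Fin n) (Fin n) ℝ) + ∑ j, βfun αstar j • K j)⁻¹ *ᵥ ones) :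
    IsMaxOn (fun α => L α (βfun αstar)) Set.univ αstar ∧
    IsMinOn (fun β => L αstar β) S (βfun αstar) := by
  have hp0 : (0:ℝ) < p := lt_trans one_pos hp
  have hp1 : (0:ℝ) < p - 1 := by linarith
  set r : ℝ := 1 / (p - 1) with hrdef
  set q : ℝ := p / (p - 1) with hqdef
  have hq : p.HolderConjugate q := Real.HolderConjugate.conjExponent hp
  set w : Fin J → ℝ := u αstar with hw
  have hwpos : ∀ j, 0 < w j := by
    intro j
    have := (hK j).dotProduct_mulVec_pos hne
    simpa [hw, hu, star_trivial] using this
  set A : ℝ := ∑ k, w k ^ q with hA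
  have hAnn : 0 ≤ A := Finset.sum_nonneg fun k _ => Real.rpow_nonneg (hwpos k).le _
  have hrp : r * p = q := by rw [hrdef, hqdef]; field_simp
  have hr1 : r + 1 = q := by rw [hrdef, hqdef]; field_simp; ring
  have hden : (∑ k, (w k ^ r) ^ p) = A := by
    rw [hA]; apply Finset.sum_congr rfl; intro k _
    rw [← Real.rpow_mul (hwpos k).le, hrp]
  set b : Fin J → ℝ := βfun αstar with hb
  have hbval : ∀ j, b j = w j ^ r / A ^ (1/p) := by
    intro j; rw [hb, hβfun]; simp only [← hw, ← hrdef, hden]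
  have hbnn : ∀ j, 0 ≤ b j := by
    intro j; rw [hbval j]
    exact div_nonneg (Real.rpow_nonneg (hwpos j).le _) (Real.rpow_nonneg hAnn _)
  -- value of ∑ b j * w j
  have hbw : ∑ j, b j * w j = A ^ (1/q) := by
    rcases eq_or_lt_of_le hAnn with hA0 | hApos
    · have hJ : ∀ k : Fin J, False := by
        intro k
        have : 0 < A := by
          rw [hA]
          exact Finset.sum_pos' (fun i _ => (Real.rpow_pos_of_pos (hwpos i) _).le)
            ⟨k, mem_univ _, Real.rpow_pos_of_pos (hwpos k) _⟩
        rw [← hA0] at this; exact lt_irrefl _ this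
      rw [show A = 0 from hA0.symm, Real.zero_rpow hq.symm.one_div_ne_zero]
      apply Finset.sum_eq_zero; intro j _; exact absurd trivial (fun _ => hJ j)
    · have hstep : ∑ j, b j * w j = A / A ^ (1/p) := by
        rw [eq_div_iff (by positivity : A ^ (1/p) ≠ 0), Finset.sum_mul]
        rw [hA]; apply Finset.sum_congr rfl; intro j _
        rw [hbval j, div_mul_eq_mul_div, div_mul_cancel₀ _ (by positivity : A ^ (1/p) ≠ 0)]
        rw [← hr1, Real.rpow_add (hwpos j), Real.rpow_one]
      rw [hstep]
      rw [show (1:ℝ)/q = 1 - 1/p by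
        rw [eq_sub_iff_add_eq, one_div, one_div, add_comm]; exact hq.inv_add_inv_eq_one]
      rw [Real.rpow_sub hApos, Real.rpow_one]
  -- the matrix M
  set M : Matrix (Fin n) (Fin n) ℝ := δ • 1 + ∑ j, b j • K j with hM
  have key : ∀ (c : Fin J → ℝ) (x y : Fin n → ℝ),
      x ⬝ᵥ ((∑ j, c j • K j) *ᵥ y) = ∑ j, c j * (x ⬝ᵥ (K j *ᵥ y)) := by
    intro c x y
    have h1 : (∑ j, c j • K j) *ᵥ y = ∑ j, (c j • K j) *ᵥ y :=
      map_sum (AddMonoidHom.mk' (fun N : Matrix (Fin n) (Fin n) ℝ => N *ᵥ y)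
        (fun a b => Matrix.add_mulVec a b y)) (fun j => c j • K j) Finset.univ
    have h2 : x ⬝ᵥ (∑ j, (c j • K j) *ᵥ y) = ∑ j, x ⬝ᵥ ((c j • K j) *ᵥ y) :=
      map_sum (AddMonoidHom.mk' (fun v : Fin n → ℝ => x ⬝ᵥ v)
        (fun a b => dotProduct_add x a b)) (fun j => (c j • K j) *ᵥ y) Finset.univ
    rw [h1, h2]
    apply Finset.sum_congr rfl; intro j _
    rw [Matrix.smul_mulVec, dotProduct_smul, smul_eq_mul]
  have hQ : ∀ x y : Fin n → ℝ,
      x ⬝ᵥ (M *ᵥ y) = δ * (x ⬝ᵥ y) + ∑ j, b j * (x ⬝ᵥ (K j *ᵥ y)) := by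
    intro x y
    rw [hM, Matrix.add_mulVec, dotProduct_add, key]
    congr 1
    rw [Matrix.smul_mulVec, Matrix.one_mulVec, dotProduct_smul, smul_eq_mul]
  have hherm : M.IsHermitian := by
    have h1 : (δ • (1 : Matrix (Fin n) (Fin n) ℝ)).IsHermitian := by
      simp [Matrix.IsHermitian, Matrix.conjTranspose_smul]
    have h2 : (∑ j, b j • K j).IsHermitian := by
      rw [Matrix.IsHermitian, Matrix.conjTranspose_sum]
      apply Finset.sum_congr rfl; intro j _
      rw [Matrix.conjTranspose_smul]
      rw [(hK j).1]
      simp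
    exact h1.add h2
  have hMpd : M.PosDef := by
    refine Matrix.PosDef.of_dotProduct_mulVec_pos hherm (fun x hx => ?_)
    simp only [star_trivial]
    rw [hQ]
    have h1 : 0 < δ * (x ⬝ᵥ x) := by
      apply mul_pos hδ
      have hxnn : (0:ℝ) ≤ x ⬝ᵥ x := Finset.sum_nonneg fun i _ => mul_self_nonneg (x i)
      rcases lt_or_eq_of_le hxnn with h | h
      · exact h
      · exact absurd (dotProduct_self_eq_zero.mp h.symm) hx
    have h2 : 0 ≤ ∑ j, b j * (x ⬝ᵥ (K j *ᵥ x)) := by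
      apply Finset.sum_nonneg; intro j _
      apply mul_nonneg (hbnn j)
      have := (hK j).posSemidef.dotProduct_mulVec_nonneg x
      simpa [star_trivial] using this
    linarith
  have hMones : M *ᵥ αstar = ones := by
    rw [hfix, Matrix.mulVec_mulVec,
      Matrix.mul_nonsing_inv _ (isUnit_iff_ne_zero.mpr hMpd.det_pos.ne'),
      Matrix.one_mulVec]
  have hsym : ∀ x y : Fin n → ℝ, x ⬝ᵥ (M *ᵥ y) = y ⬝ᵥ (M *ᵥ x) := by
    intro x y
    rw [Matrix.dotProduct_mulVec, ← Matrix.mulVec_transpose]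
    have : Mᵀ = M := by
      have := hherm; rwa [Matrix.IsHermitian, Matrix.conjTranspose_eq_transpose_of_trivial] at this
    rw [this, dotProduct_comm]
  constructor
  · -- IsMaxOn
    intro α _
    simp only [Set.mem_setOf_eq, hL]
    have hLform : ∀ x : Fin n → ℝ,
        -(x ⬝ᵥ ((∑ j, b j • K j) *ᵥ x)) - δ * (x ⬝ᵥ x) + 2 * (x ⬝ᵥ ones)
          = -(x ⬝ᵥ (M *ᵥ x)) + 2 * (x ⬝ᵥ (M *ᵥ αstar)) := by
      intro x
      rw [hMones, hQ, key]; ring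
    rw [hLform, hLform]
    have hpsd : 0 ≤ (αstar - α) ⬝ᵥ (M *ᵥ (αstar - α)) := by
      have := hMpd.posSemidef.dotProduct_mulVec_nonneg (αstar - α)
      simpa [star_trivial] using this
    have hexp : (αstar - α) ⬝ᵥ (M *ᵥ (αstar - α))
        = αstar ⬝ᵥ (M *ᵥ αstar) - 2 * (α ⬝ᵥ (M *ᵥ αstar)) + α ⬝ᵥ (M *ᵥ α) := by
      rw [Matrix.mulVec_sub, dotProduct_sub, sub_dotProduct, sub_dotProduct,
        hsym αstar α]
      ring
    rw [hexp] at hpsd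
    linarith
  · -- IsMinOn
    intro β hβ
    rw [hS] at hβ
    obtain ⟨hβnn, hβnorm⟩ := hβ
    simp only [Set.mem_setOf_eq, hL, ← hb]
    have hred : ∀ c : Fin J → ℝ,
        -(αstar ⬝ᵥ ((∑ j, c j • K j) *ᵥ αstar)) - δ * (αstar ⬝ᵥ αstar) + 2 * (αstar ⬝ᵥ ones)
          = -(∑ j, c j * w j) - δ * (αstar ⬝ᵥ αstar) + 2 * (αstar ⬝ᵥ ones) := by
      intro c
      have hwj : ∀ j, αstar ⬝ᵥ (K j *ᵥ αstar) = w j := by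
        intro j; rw [hw, hu]
      rw [key]
      simp only [hwj]
    rw [hred, hred]
    have hineq : ∑ j, β j * w j ≤ ∑ j, b j * w j := by
      rw [hbw]
      calc ∑ j, β j * w j
          ≤ (∑ j, β j ^ p) ^ (1/p) * (∑ j, w j ^ q) ^ (1/q) :=
            Real.inner_le_Lp_mul_Lq_of_nonneg univ hq (fun j _ => hβnn j)
              (fun j _ => (hwpos j).le)
        _ ≤ 1 * A ^ (1/q) := by
            apply mul_le_mul_of_nonneg_right hβnorm (Real.rpow_nonneg hAnn _)
        _ = A ^ (1/q) := one_mul _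
    linarith
end
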